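/- Fix integers k ≥ 3, n ≥ k, and m ≥ 1, and let X be the number of 2-colorings of H_k(n,m). Then E[X²] equals the sum, over all quadruples of non-negative integers (z₁,z₂,z₃,z₄) with z₁+z₂+z₃+z₄ = n, of the multinomial coefficient n!/(z₁! z₂! z₃! z₄!) times (1 − (C(z₁+z₂,k) + C(z₃+z₄,k) + C(z₁+z₃,k) + C(z₂+z₄,k) − C(z₁,k) − C(z₂,k) − C(z₃,k) − C(z₄,k)) / C(n,k))^m. -/

import Mathlib

open Filter Real

/-- `c` is a proper 2-coloring of the multi-hypergraph with edge tuple `E`: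
no edge is monochromatic. -/
def ProperColoring {n k m : ℕ} (E : Fin m → {s : Finset (Fin n) // s.card = k})
    (c : Fin n → Bool) : Prop :=
  ∀ i : Fin m, ∃ u ∈ (E i).1, ∃ v ∈ (E i).1, c u ≠ c v

/-- The expected value of the square of the number of 2-colorings of the random
`k`-uniform hypergraph `H_k(n,m)` whose `m` edges are chosen uniformly, independently
and with replacement from all `C(n,k)` possible `k`-subsets of `{1,…,n}`. -/
noncomputable def expSqNumColorings (k n m : ℕ) : ℝ :=
  (∑ E : Fin m → {s : Finset (Fin n) // s.card = k},
      (Nat.card {c : Fin n → Bool // ProperColoring E c} : ℝ) ^ 2) / ((n.choose k : ℝ) ^ m)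

/-!
Write `X²` as a sum over ordered pairs `(S, T)` of colourings. Since the `m` edges are independent
and uniform, `E[X²] = ∑_{(S,T)} (q(S,T) / C(n,k))^m`, where `q(S,T)` counts the `k`-sets that are
bichromatic under both `S` and `T`. A `k`-set (`k ≥ 1`) is monochromatic under a colouring iff it
lies in one of its colour classes, so by inclusion–exclusion `q(S,T)` depends only on the sizes
`z₁, …, z₄` of the four classes of `v ↦ (S v, T v)`. Finally, the number of maps
`{1,…,n} → {1,…,4}` with fibre sizes `z` is the multinomial coefficient, which one reads off as
the coefficient of `∏ Xⱼ^{zⱼ}` in `(X₁ + ⋯ + X₄)ⁿ`.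
-/

open Finset MvPolynomial

section Fibers
variable {α β γ : Type*} [Fintype α] [DecidableEq β] [DecidableEq γ]

def fiberCard (f : α → β) (b : β) : ℕ := #{a | f a = b}

theorem sum_fiberCard [Fintype β] (f : α → β) : ∑ b, fiberCard f b = Fintype.card α :=
  (card_eq_sum_card_fiberwise fun a _ => mem_univ (f a)).symm

theorem fiberCard_comp [Fintype β] (f : α → β) (g : β → γ) (c : γ) :
    fiberCard (g ∘ f) c = ∑ b with g b = c, fiberCard f b := by
  rw [fiberCard, card_eq_sum_card_fiberwise (f := f) (t := {b | g b = c})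
    fun a ha => by simpa using ha]
  refine sum_congr rfl fun b hb => ?_
  rw [fiberCard, filter_filter]
  refine congrArg card (filter_congr fun a _ => ⟨And.right, fun hab => ⟨?_, hab⟩⟩)
  simpa [hab] using hb

theorem fiberCard_equiv_comp (f : α → β) (e : β ≃ γ) (c : γ) :
    fiberCard (fun a => e (f a)) c = fiberCard f (e.symm c) := by
  simp only [fiberCard, ← Equiv.eq_symm_apply]

variable [Fintype β]

theorem prod_X_comp_eq_monomial (f : α → β) :
    ∏ a, (X (f a) : MvPolynomial β ℕ) =
      monomial (Finsupp.equivFunOnFinite.symm (fiberCard f)) 1 := by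
  rw [← prod_fiberwise univ f, monomial_eq, C_1, one_mul, Finsupp.prod_fintype _ _ (by simp)]
  refine prod_congr rfl fun b _ => ?_
  rw [prod_congr rfl fun a ha => congrArg X (mem_filter.1 ha).2, prod_const]
  rfl

/-- Compare the coefficients of `∏ b, X b ^ z b` on both sides of
`(∑ b, X b) ^ n = ∑ f : Fin n → β, ∏ i, X (f i)`. -/
theorem card_filter_fiberCard_eq {n : ℕ} {z : β → ℕ} (hz : ∑ b, z b = n) :
    #{f : Fin n → β | fiberCard f = z} = Nat.multinomial univ z := by
  have hcoeff := congrArg (coeff (Finsupp.equivFunOnFinite.symm z))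
    (prod_univ_sum (fun _ : Fin n => (univ : Finset β)) fun _ b => (X b : MvPolynomial β ℕ))
  simp only [prod_const, card_fin, Fintype.piFinset_univ, prod_X_comp_eq_monomial, coeff_sum,
    coeff_monomial, coeff_sum_X_pow_of_fintype] at hcoeff
  rw [Finsupp.sum_fintype _ _ (by simp)] at hcoeff
  simp only [Finsupp.coe_equivFunOnFinite_symm, hz, if_true, Equiv.apply_eq_iff_eq, sum_boole,
    Nat.cast_id] at hcoeff
  rw [← hcoeff, ← Finsupp.multinomial_of_support_subset (subset_univ _),
    Finsupp.coe_equivFunOnFinite_symm]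

theorem sum_fiberCard_eq_sum_antidiagonalTuple {R : Type*} [NonAssocSemiring R] {n r : ℕ}
    (F : (Fin r → ℕ) → R) :
    ∑ f : Fin n → Fin r, F (fiberCard f) =
      ∑ z ∈ Finset.Nat.antidiagonalTuple r n, (Nat.multinomial univ z : R) * F z := by
  rw [← sum_fiberwise_of_maps_to' (g := fiberCard) (t := Finset.Nat.antidiagonalTuple r n)]
  · refine sum_congr rfl fun z hz => ?_
    rw [sum_const, card_filter_fiberCard_eq (Finset.Nat.mem_antidiagonalTuple.1 hz), nsmul_eq_mul]
  · intro f _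
    rw [Finset.Nat.mem_antidiagonalTuple, sum_fiberCard, Fintype.card_fin]

end Fibers

section Bichromatic
variable {α β γ : Type*} [DecidableEq β] [DecidableEq γ]

def IsBichromatic (c : α → β) (s : Finset α) : Prop := ∃ u ∈ s, ∃ v ∈ s, c u ≠ c v

instance (c : α → β) : DecidablePred (IsBichromatic c) :=
  fun s => inferInstanceAs (Decidable (∃ u ∈ s, ∃ v ∈ s, c u ≠ c v))

theorem not_isBichromatic_iff {c : α → β} {s : Finset α} :
    ¬IsBichromatic c s ↔ ∀ u ∈ s, ∀ v ∈ s, c u = c v := by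
  simp [IsBichromatic]

theorem not_isBichromatic_prod_iff {c : α → β} {d : α → γ} {s : Finset α} :
    ¬IsBichromatic (fun a => (c a, d a)) s ↔ ¬IsBichromatic c s ∧ ¬IsBichromatic d s := by
  simp only [not_isBichromatic_iff, Prod.ext_iff]
  exact ⟨fun h => ⟨fun u hu v hv => (h u hu v hv).1, fun u hu v hv => (h u hu v hv).2⟩,
    fun h u hu v hv => ⟨h.1 u hu v hv, h.2 u hu v hv⟩⟩

variable [Fintype α] [Fintype β] [Fintype γ] {k : ℕ}

/-- A nonempty set is monochromatic exactly when it lies in one fiber, and distinct fibers are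
disjoint. -/
theorem card_filter_not_isBichromatic (c : α → β) (hk : 1 ≤ k) :
    #{s ∈ powersetCard k univ | ¬IsBichromatic c s} = ∑ b, (fiberCard c b).choose k := by
  classical
  have hfibers : {s ∈ powersetCard k (univ : Finset α) | ¬IsBichromatic c s} =
      univ.biUnion fun b => powersetCard k {a | c a = b} := by
    ext s
    simp only [mem_filter, mem_powersetCard, implies_true, not_isBichromatic_iff, mem_biUnion,
      mem_univ, true_and, subset_iff]
    constructor
    · rintro ⟨hs, hmono⟩
      obtain ⟨a, ha⟩ := card_pos.1 (by omega : 0 < #s)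
      exact ⟨c a, fun u hu => hmono u hu a ha, hs⟩
    · rintro ⟨b, hb, hs⟩
      exact ⟨hs, fun u hu v hv => (hb hu).trans (hb hv).symm⟩
  rw [hfibers, card_biUnion]
  · simp [card_powersetCard, fiberCard]
  · intro b _ b' _ hne
    refine disjoint_left.2 fun s hs hs' => ?_
    obtain ⟨a, ha⟩ := card_pos.1 (by have := (mem_powersetCard.1 hs).2; omega : 0 < #s)
    exact hne ((mem_filter.1 ((mem_powersetCard.1 hs).1 ha)).2.symm.trans
      (mem_filter.1 ((mem_powersetCard.1 hs').1 ha)).2)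

/-- Inclusion–exclusion, with both sides moved so that no subtraction occurs. -/
theorem card_filter_isBichromatic_and_add (c : α → β) (d : α → γ) (hk : 1 ≤ k) :
    #{s ∈ powersetCard k univ | IsBichromatic c s ∧ IsBichromatic d s}
        + ∑ b, (fiberCard c b).choose k + ∑ b, (fiberCard d b).choose k =
      (Fintype.card α).choose k + ∑ p, (fiberCard (fun a => (c a, d a)) p).choose k := by
  classical
  have hunion := card_union_add_card_inter {s ∈ powersetCard k univ | ¬IsBichromatic c s}
    {s ∈ powersetCard k univ | ¬IsBichromatic d s}
  have hcompl := card_filter_add_card_filter_not (s := powersetCard k univ)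
    fun s => ¬IsBichromatic c s ∨ ¬IsBichromatic d s
  rw [← filter_or, ← filter_and] at hunion
  simp only [not_or, not_not] at hcompl
  rw [← card_filter_not_isBichromatic c hk, ← card_filter_not_isBichromatic d hk,
    ← card_filter_not_isBichromatic _ hk, ← card_univ, ← card_powersetCard]
  simp only [not_isBichromatic_prod_iff]
  omega

end Bichromatic

/-- The paper's `z₁, z₂, z₃, z₄` count the colour pairs `(0,0), (0,1), (1,0), (1,1)`; here they are
`z 0, z 1, z 2, z 3`. -/
def boolProdEquivFin4 : Bool × Bool ≃ Fin 4 :=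
  (finTwoEquiv.symm.prodCongr finTwoEquiv.symm).trans finProdFinEquiv

theorem card_filter_isBichromatic_and_add_bool {α : Type*} [Fintype α] (c d : α → Bool) {k : ℕ}
    (hk : 1 ≤ k) {z : Fin 4 → ℕ} (hz : fiberCard (fun a => boolProdEquivFin4 (c a, d a)) = z) :
    #{s ∈ powersetCard k univ | IsBichromatic c s ∧ IsBichromatic d s}
        + ((z 0 + z 1).choose k + (z 2 + z 3).choose k)
        + ((z 0 + z 2).choose k + (z 1 + z 3).choose k) =
      (Fintype.card α).choose k
        + ((z 0).choose k + (z 1).choose k + (z 2).choose k + (z 3).choose k) := by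
  have hpair (j : Fin 4) : fiberCard (fun a => (c a, d a)) (boolProdEquivFin4.symm j) = z j := by
    rw [← hz, fiberCard_equiv_comp]
  have hc (b : Bool) : fiberCard c b = ∑ j with (boolProdEquivFin4.symm j).1 = b, z j := by
    rw [← hz, ← fiberCard_comp]
    congr 1
    ext a
    simp
  have hd (b : Bool) : fiberCard d b = ∑ j with (boolProdEquivFin4.symm j).2 = b, z j := by
    rw [← hz, ← fiberCard_comp]
    congr 1
    ext a
    simp
  have hsymm : ∀ j, boolProdEquivFin4.symm j =
      ![(false, false), (false, true), (true, false), (true, true)] j := by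
    decide
  have hc₀ : fiberCard c false = z 0 + z 1 := by simp [hc, hsymm, sum_filter, Fin.sum_univ_four]
  have hc₁ : fiberCard c true = z 2 + z 3 := by simp [hc, hsymm, sum_filter, Fin.sum_univ_four]
  have hd₀ : fiberCard d false = z 0 + z 2 := by simp [hd, hsymm, sum_filter, Fin.sum_univ_four]
  have hd₁ : fiberCard d true = z 1 + z 3 := by simp [hd, hsymm, sum_filter, Fin.sum_univ_four]
  have := card_filter_isBichromatic_and_add c d hk
  rw [← Equiv.sum_comp boolProdEquivFin4.symm, Fin.sum_univ_four, hpair, hpair, hpair, hpair,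
    Fintype.sum_bool, Fintype.sum_bool, hc₀, hc₁, hd₀, hd₁] at this
  omega

section SecondMoment
variable {n k m : ℕ}

theorem properColoring_iff {E : Fin m → {s : Finset (Fin n) // #s = k}} {c : Fin n → Bool} :
    ProperColoring E c ↔ ∀ i, IsBichromatic c (E i).1 :=
  Iff.rfl

instance (E : Fin m → {s : Finset (Fin n) // #s = k}) : DecidablePred (ProperColoring E) :=
  fun _ => decidable_of_iff' _ properColoring_iff

theorem card_properColoring_sq (E : Fin m → {s : Finset (Fin n) // #s = k}) :
    Nat.card {c // ProperColoring E c} ^ 2 =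
      #{p : (Fin n → Bool) × (Fin n → Bool) | ProperColoring E p.1 ∧ ProperColoring E p.2} := by
  rw [Nat.card_eq_fintype_card, sq, ← Fintype.card_prod,
    ← Fintype.card_congr Equiv.subtypeProdEquivProd, Fintype.card_subtype]

theorem card_filter_forall_apply {ι : Type*} [Fintype ι] (p : ι → Prop) [DecidablePred p] :
    #{E : Fin m → ι | ∀ i, p (E i)} = #{x | p x} ^ m := by
  rw [← card_fin m, ← prod_const, ← Fintype.card_piFinset, card_fin]
  congr 1
  ext E
  simp

theorem card_filter_properColoring_and (c d : Fin n → Bool) :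
    #{E : Fin m → {s : Finset (Fin n) // #s = k} | ProperColoring E c ∧ ProperColoring E d} =
      #{s ∈ powersetCard k univ | IsBichromatic c s ∧ IsBichromatic d s} ^ m := by
  have hsubtype : #{s : {s : Finset (Fin n) // #s = k} | IsBichromatic c s ∧ IsBichromatic d s} =
      #{s ∈ powersetCard k univ | IsBichromatic c s ∧ IsBichromatic d s} := by
    rw [← card_map (Function.Embedding.subtype _)]
    congr 1
    ext s
    simp [and_comm, and_assoc]
  rw [← hsubtype, ← card_filter_forall_apply]
  congr 1
  ext E
  simp [properColoring_iff, forall_and]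

theorem expSqNumColorings_eq_sum :
    expSqNumColorings k n m = ∑ p : (Fin n → Bool) × (Fin n → Bool),
      ((#{s ∈ powersetCard k univ | IsBichromatic p.1 s ∧ IsBichromatic p.2 s} : ℝ) /
        n.choose k) ^ m := by
  simp only [expSqNumColorings, ← Nat.cast_pow, card_properColoring_sq, div_pow, ← sum_div,
    ← card_filter_properColoring_and]
  congr 1
  exact_mod_cast sum_card_bipartiteAbove_eq_sum_card_bipartiteBelow _

end SecondMoment

theorem second_moment_formula_general (k n m : ℕ) (hk : 3 ≤ k) (hn : k ≤ n) :
    expSqNumColorings k n m =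
      ∑ z ∈ Finset.Nat.antidiagonalTuple 4 n, (Nat.multinomial Finset.univ z : ℝ) *
        (1 - (((z 0 + z 1).choose k : ℝ) + ((z 2 + z 3).choose k : ℝ)
            + ((z 0 + z 2).choose k : ℝ) + ((z 1 + z 3).choose k : ℝ)
            - ((z 0).choose k : ℝ) - ((z 1).choose k : ℝ)
            - ((z 2).choose k : ℝ) - ((z 3).choose k : ℝ)) / (n.choose k : ℝ)) ^ m := by
  have hN : (n.choose k : ℝ) ≠ 0 := Nat.cast_ne_zero.2 (Nat.choose_pos hn).ne'
  let toFinFour : (Fin n → Bool) × (Fin n → Bool) ≃ (Fin n → Fin 4) :=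
    (Equiv.arrowProdEquivProdArrow _ _ _).symm.trans
      (Equiv.arrowCongr (Equiv.refl _) boolProdEquivFin4)
  rw [expSqNumColorings_eq_sum, ← sum_fiberCard_eq_sum_antidiagonalTuple]
  refine Fintype.sum_equiv toFinFour _ _ fun p => ?_
  have hcount := congrArg (Nat.cast : ℕ → ℝ) <|
    card_filter_isBichromatic_and_add_bool p.1 p.2 (by omega : 1 ≤ k)
      (z := fiberCard (toFinFour p)) rfl
  push_cast [Fintype.card_fin] at hcount
  congr 1
  rw [div_eq_iff hN, sub_mul, div_mul_cancel₀ _ hN, one_mul]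
  linarith

/-- Second moment formula: for k ≥ 3, n ≥ k, m ≥ 1, E[X²] equals the sum over all
quadruples (z₁,z₂,z₃,z₄) of non-negative integers with z₁+z₂+z₃+z₄ = n of the
multinomial coefficient n!/(z₁!z₂!z₃!z₄!) times
(1 − (C(z₁+z₂,k) + C(z₃+z₄,k) + C(z₁+z₃,k) + C(z₂+z₄,k)
      − C(z₁,k) − C(z₂,k) − C(z₃,k) − C(z₄,k))/C(n,k))^m. -/
theorem second_moment_formula (k n m : ℕ) (hk : 3 ≤ k) (hn : k ≤ n) (hm : 1 ≤ m) :
    expSqNumColorings k n m =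
      ∑ z ∈ Finset.Nat.antidiagonalTuple 4 n, (Nat.multinomial Finset.univ z : ℝ) *
        (1 - (((z 0 + z 1).choose k : ℝ) + ((z 2 + z 3).choose k : ℝ)
            + ((z 0 + z 2).choose k : ℝ) + ((z 1 + z 3).choose k : ℝ)
            - ((z 0).choose k : ℝ) - ((z 1).choose k : ℝ)
            - ((z 2).choose k : ℝ) - ((z 3).choose k : ℝ)) / (n.choose k : ℝ)) ^ m :=
  second_moment_formula_general k n m hk hn
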